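/- Fix ϑ ∈ (1/2,1), c ≠ 0, ζ > 0. For Δ > 0 define K(Δ) = inf{ i ∈ ℕ : |c ∫_{(i-1)Δ}^{iΔ} s^{-ϑ} ds| < ζ √Δ }. Then there exist constants 0 < c₁ ≤ c₂ < ∞ and Δ₀ > 0 such that for all 0 < Δ < Δ₀, c₁ Δ^{(1/2-ϑ)/ϑ} ≤ K(Δ) ≤ c₂ Δ^{(1/2-ϑ)/ϑ}. -/

import Mathlib

/-!
Substituting `s = Δ u` turns the increment over `[(i-1)Δ, iΔ]` into `Δ^{1-ϑ} J i` with
`J i = ∫_{i-1}^{i} u^{-ϑ} du` independent of `Δ`, so the truncation condition reads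
`|J i| < ε := (ζ/|c|) Δ^{ϑ-1/2}`, and `ε → 0` because `ϑ > 1/2`. Since `u^{-ϑ}` is decreasing,
`i^{-ϑ} ≤ J i ≤ (i-1)^{-ϑ}` for `i ≥ 1`, while `J 0 ≠ 0` stays out of reach once `ε` is small.
Hence with `M = ε^{-1/ϑ}` the first index with `|J i| < ε` lies in `(M, M + 2]`, and `M` is a
constant multiple of `Δ^{(1/2-ϑ)/ϑ}`.
-/

open Real Set

-- `Real.mul_rpow` needs `0 ≤ x`; the substitution `s = Δ u` also runs over `u ∈ [-1, 0]`.
lemma Real.mul_rpow_of_pos_right {x y : ℝ} (hy : 0 < y) (z : ℝ) :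
    (x * y) ^ z = x ^ z * y ^ z := by
  rcases le_or_gt 0 x with hx | hx
  · exact mul_rpow hx hy.le
  · rw [rpow_def_of_neg (mul_neg_of_neg_of_pos hx hy), rpow_def_of_neg hx, rpow_def_of_pos hy,
      log_mul hx.ne hy.ne', add_mul, exp_add]
    ring

lemma integral_rpow_mul_right {Δ : ℝ} (hΔ : 0 < Δ) (a b r : ℝ) :
    ∫ s in (a * Δ)..(b * Δ), s ^ r = Δ ^ (r + 1) * ∫ u in a..b, u ^ r := by
  have h := intervalIntegral.integral_comp_mul_right (fun s => s ^ r) (a := a) (b := b) hΔ.ne'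
  simp only [mul_rpow_of_pos_right hΔ, intervalIntegral.integral_mul_const, smul_eq_mul] at h
  rw [eq_inv_mul_iff_mul_eq₀ hΔ.ne'] at h
  rw [← h, rpow_add_one hΔ.ne']
  ring

lemma mul_rpow_le_integral_rpow {r a b : ℝ} (hr : -1 < r) (hr0 : r ≤ 0) (ha : 0 ≤ a)
    (hab : a ≤ b) : (b - a) * b ^ r ≤ ∫ x in a..b, x ^ r := by
  rw [← smul_eq_mul, ← intervalIntegral.integral_const]
  refine intervalIntegral.integral_mono_on_of_le_Ioo hab intervalIntegrable_const
    (intervalIntegral.intervalIntegrable_rpow' hr) fun x hx => ?_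
  exact rpow_le_rpow_of_nonpos (ha.trans_lt hx.1) hx.2.le hr0

lemma integral_rpow_le_mul_rpow {r a b : ℝ} (hr0 : r ≤ 0) (ha : 0 < a) (hab : a ≤ b) :
    ∫ x in a..b, x ^ r ≤ (b - a) * a ^ r := by
  have h0 : (0 : ℝ) ∉ uIcc a b := by
    rw [uIcc_of_le hab]
    exact fun h => (ha.trans_le h.1).false
  rw [← smul_eq_mul, ← intervalIntegral.integral_const]
  exact intervalIntegral.integral_mono_on hab
    (intervalIntegral.intervalIntegrable_rpow (Or.inr h0)) intervalIntegrable_const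
    fun x hx => rpow_le_rpow_of_nonpos ha hx.1 hr0

noncomputable def unitIncrement (ϑ : ℝ) (i : ℕ) : ℝ :=
  ∫ u in ((i : ℝ) - 1)..(i : ℝ), u ^ (-ϑ)

section unitIncrement

variable {ϑ : ℝ}

lemma rpow_neg_le_unitIncrement (hϑ0 : 0 ≤ ϑ) (hϑ1 : ϑ < 1) {i : ℕ} (hi : 1 ≤ i) :
    (i : ℝ) ^ (-ϑ) ≤ unitIncrement ϑ i := by
  have hi' : (1 : ℝ) ≤ i := by exact_mod_cast hi
  have h := mul_rpow_le_integral_rpow (r := -ϑ) (by linarith) (by linarith)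
    (sub_nonneg.mpr hi') (sub_le_self (i : ℝ) zero_le_one)
  rwa [sub_sub_cancel, one_mul] at h

lemma abs_unitIncrement_le (hϑ0 : 0 ≤ ϑ) (hϑ1 : ϑ < 1) {i : ℕ} (hi : 2 ≤ i) :
    |unitIncrement ϑ i| ≤ ((i : ℝ) - 1) ^ (-ϑ) := by
  have hi' : (2 : ℝ) ≤ i := by exact_mod_cast hi
  have h := integral_rpow_le_mul_rpow (r := -ϑ) (by linarith) (by linarith : (0 : ℝ) < i - 1)
    (sub_le_self (i : ℝ) zero_le_one)
  rw [sub_sub_cancel, one_mul] at h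
  have h_nonneg : 0 ≤ unitIncrement ϑ i :=
    (rpow_nonneg (by linarith) _).trans (rpow_neg_le_unitIncrement hϑ0 hϑ1 (by omega))
  rwa [abs_of_nonneg h_nonneg]

-- The index `i = 0` integrates over `[-1, 0]`, where `u ^ (-ϑ) = |u| ^ (-ϑ) * cos (ϑ * π)`.
lemma unitIncrement_zero (hϑ1 : ϑ < 1) :
    unitIncrement ϑ 0 = -(cos ((1 - ϑ) * π) / (1 - ϑ)) := by
  rw [unitIncrement, integral_rpow (Or.inl (by linarith)), Nat.cast_zero, zero_sub,
    show -ϑ + 1 = 1 - ϑ by ring, zero_rpow (by linarith), rpow_def_of_neg (by norm_num),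
    log_neg_eq_log, log_one, zero_mul, exp_zero, one_mul, zero_sub, neg_div]

lemma unitIncrement_zero_ne_zero (hϑ : 1 / 2 < ϑ) (hϑ1 : ϑ < 1) : unitIncrement ϑ 0 ≠ 0 := by
  have hcos : 0 < cos ((1 - ϑ) * π) :=
    cos_pos_of_mem_Ioo ⟨by nlinarith [pi_pos], by nlinarith [pi_pos]⟩
  rw [unitIncrement_zero hϑ1, neg_ne_zero]
  exact (div_pos hcos (by linarith)).ne'

end unitIncrement

section counting

variable {J : ℕ → ℝ} {ϑ M : ℝ}

lemma lt_of_abs_lt_rpow_neg (hϑ : 0 < ϑ) (hM : 0 < M) (h0 : M ^ (-ϑ) ≤ |J 0|)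
    (hlow : ∀ i : ℕ, 1 ≤ i → (i : ℝ) ^ (-ϑ) ≤ |J i|) {i : ℕ} (hi : |J i| < M ^ (-ϑ)) :
    M < i := by
  rcases Nat.eq_zero_or_pos i with rfl | hi1
  · exact absurd (hi.trans_le h0) (lt_irrefl _)
  · have hi0 : (0 : ℝ) < i := by exact_mod_cast hi1
    exact (rpow_lt_rpow_iff_of_neg hi0 hM (by linarith)).mp ((hlow i hi1).trans_lt hi)

lemma abs_floor_add_two_lt_rpow_neg (hϑ : 0 < ϑ) (hM : 0 < M)
    (hup : ∀ i : ℕ, 2 ≤ i → |J i| ≤ ((i : ℝ) - 1) ^ (-ϑ)) :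
    |J (⌊M⌋₊ + 2)| < M ^ (-ϑ) := by
  have hlt : M < ((⌊M⌋₊ + 2 : ℕ) : ℝ) - 1 := by
    push_cast
    linarith [Nat.lt_floor_add_one M]
  exact (hup _ le_add_self).trans_lt (rpow_lt_rpow_of_neg hM hlt (by linarith))

lemma sInf_abs_lt_rpow_neg_mem_Ioc (hϑ : 0 < ϑ) (hM : 0 < M) (h0 : M ^ (-ϑ) ≤ |J 0|)
    (hlow : ∀ i : ℕ, 1 ≤ i → (i : ℝ) ^ (-ϑ) ≤ |J i|)
    (hup : ∀ i : ℕ, 2 ≤ i → |J i| ≤ ((i : ℝ) - 1) ^ (-ϑ)) :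
    ((sInf {i | |J i| < M ^ (-ϑ)} : ℕ) : ℝ) ∈ Ioc M (M + 2) := by
  have hmem : ⌊M⌋₊ + 2 ∈ {i | |J i| < M ^ (-ϑ)} := abs_floor_add_two_lt_rpow_neg hϑ hM hup
  refine ⟨lt_of_abs_lt_rpow_neg hϑ hM h0 hlow (Nat.sInf_mem ⟨_, hmem⟩), ?_⟩
  calc ((sInf {i | |J i| < M ^ (-ϑ)} : ℕ) : ℝ) ≤ ((⌊M⌋₊ + 2 : ℕ) : ℝ) := by
        exact_mod_cast Nat.sInf_le hmem
    _ ≤ M + 2 := by push_cast; linarith [Nat.floor_le hM.le]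

end counting

lemma rpow_inv_mul_rpow_div_rpow_neg {a Δ p ϑ : ℝ} (ha : 0 < a) (hΔ : 0 < Δ) (hϑ : ϑ ≠ 0) :
    (a ^ ϑ⁻¹ * Δ ^ (p / ϑ)) ^ (-ϑ) = a⁻¹ * Δ ^ (-p) := by
  rw [mul_rpow (by positivity) (by positivity), ← rpow_mul ha.le, ← rpow_mul hΔ.le,
    show ϑ⁻¹ * -ϑ = -1 by field_simp, show p / ϑ * -ϑ = -p by field_simp, rpow_neg_one]

lemma abs_mul_integral_rpow_lt_iff {ϑ c ζ Δ : ℝ} (hc : c ≠ 0) (hΔ : 0 < Δ) (i : ℕ) :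
    |c * ∫ s in (((i : ℝ) - 1) * Δ)..((i : ℝ) * Δ), s ^ (-ϑ)| < ζ * √Δ ↔
      |unitIncrement ϑ i| < ζ / |c| * Δ ^ (ϑ - 1 / 2) := by
  have hscale : 0 < |c| * Δ ^ (-ϑ + 1) := mul_pos (abs_pos.mpr hc) (rpow_pos_of_pos hΔ _)
  have hsqrt : ζ * √Δ = |c| * Δ ^ (-ϑ + 1) * (ζ / |c| * Δ ^ (ϑ - 1 / 2)) := by
    calc ζ * √Δ = ζ * Δ ^ ((-ϑ + 1) + (ϑ - 1 / 2)) := by rw [sqrt_eq_rpow]; ring_nf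
      _ = _ := by rw [rpow_add hΔ]; field_simp
  rw [integral_rpow_mul_right hΔ, hsqrt, abs_mul, abs_mul, abs_of_pos (rpow_pos_of_pos hΔ _),
    ← mul_assoc, unitIncrement]
  exact mul_lt_mul_iff_right₀ hscale

/-- The number of truncated increments after a drift burst is of exact order
`Δ^{(1/2-ϑ)/ϑ}`. -/
theorem truncation_count_order
    (ϑ c ζ : ℝ) (hϑ : ϑ ∈ Set.Ioo (1/2 : ℝ) 1) (hc : c ≠ 0) (hζ : 0 < ζ)
    (K : ℝ → ℕ)
    (hK : ∀ Δ : ℝ, K Δ = sInf {i : ℕ |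
      |c * ∫ s in (((i : ℝ) - 1) * Δ)..((i : ℝ) * Δ), s ^ (-ϑ)| < ζ * Real.sqrt Δ}) :
    ∃ c₁ c₂ Δ₀ : ℝ, 0 < c₁ ∧ c₁ ≤ c₂ ∧ 0 < Δ₀ ∧
      ∀ Δ : ℝ, 0 < Δ → Δ < Δ₀ →
        c₁ * Δ ^ ((1/2 - ϑ)/ϑ) ≤ (K Δ : ℝ) ∧ (K Δ : ℝ) ≤ c₂ * Δ ^ ((1/2 - ϑ)/ϑ) := by
  obtain ⟨hϑ, hϑ1⟩ := hϑ
  have hϑ0 : 0 < ϑ := by linarith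
  have hc' : 0 < |c| := abs_pos.mpr hc
  set δ := min 1 |unitIncrement ϑ 0|
  have hδ : 0 < δ := lt_min one_pos (abs_pos.mpr (unitIncrement_zero_ne_zero hϑ hϑ1))
  set C := (|c| / ζ) ^ ϑ⁻¹
  have hC : 0 < C := by positivity
  refine ⟨C, 3 * C, (δ * |c| / ζ) ^ (ϑ - 1 / 2)⁻¹, hC, by linarith, by positivity,
    fun Δ hΔ hΔ₀ => ?_⟩
  set M := C * Δ ^ ((1 / 2 - ϑ) / ϑ)
  have hM : 0 < M := by positivity
  have hMε : M ^ (-ϑ) = ζ / |c| * Δ ^ (ϑ - 1 / 2) := by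
    rw [rpow_inv_mul_rpow_div_rpow_neg (div_pos hc' hζ) hΔ hϑ0.ne', inv_div, neg_sub]
  have hε : M ^ (-ϑ) < δ := by
    rw [hMε, ← lt_div_iff₀' (div_pos hζ hc'), div_div_eq_mul_div]
    exact (lt_rpow_inv_iff_of_pos hΔ.le (by positivity) (by linarith)).mp hΔ₀
  have hM1 : 1 ≤ M := by
    rw [← rpow_le_rpow_iff_of_neg hM one_pos (neg_neg_of_pos hϑ0), one_rpow]
    exact hε.le.trans (min_le_left _ _)
  have hset : {i : ℕ | |c * ∫ s in (((i : ℝ) - 1) * Δ)..((i : ℝ) * Δ), s ^ (-ϑ)| < ζ * √Δ} =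
      {i | |unitIncrement ϑ i| < M ^ (-ϑ)} := by
    rw [hMε]
    ext i
    exact abs_mul_integral_rpow_lt_iff hc hΔ i
  obtain ⟨hK_gt, hK_le⟩ := sInf_abs_lt_rpow_neg_mem_Ioc hϑ0 hM (hε.le.trans (min_le_right _ _))
    (fun i hi => (rpow_neg_le_unitIncrement hϑ0.le hϑ1 hi).trans (le_abs_self _))
    (fun i hi => abs_unitIncrement_le hϑ0.le hϑ1 hi)
  rw [hK, hset]
  exact ⟨hK_gt.le, by linarith⟩
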